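/- arXiv:2112.11141 — 4 statements merged into one kernel-verified Lean document; each statement's English description precedes it below -/
import Mathlib

section
/- Let H be a separable Hilbert space and Q a positive semidefinite symmetric bounded operator on H. Then ker(Q) = ker(Q^{1/2}), and the range Q(H) is dense in the Hilbert space (Q^{1/2}(H), ⟨·,·⟩_{Q^{1/2}(H)}) where ⟨Q^{1/2}u, Q^{1/2}v⟩_{Q^{1/2}(H)} := ⟨P u, P v⟩_H with P the orthogonal projection onto ker(Q)^⊥. -/
open scoped RealInnerProductSpace

namespace IsSelfAdjoint

variable {𝕜 E : Type*} [RCLike 𝕜] [NormedAddCommGroup E] [InnerProductSpace 𝕜 E] [CompleteSpace E]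
  {R : E →L[𝕜] E}

theorem ker_comp_self (hR : IsSelfAdjoint R) : (R ∘L R).ker = R.ker := by
  simpa only [hR.adjoint_eq] using R.ker_adjoint_comp_self

theorem orthogonal_ker (hR : IsSelfAdjoint R) : R.kerᗮ = R.range.topologicalClosure := by
  simpa only [hR.adjoint_eq] using R.orthogonal_ker

end IsSelfAdjoint

/-- The `Q^{1/2}(H)`-distance between `Q v = R (R v)` and `R u`, for `u ∈ (ker R)ᗮ`, is
`‖R v - u‖`, so density of `Q(H)` in `Q^{1/2}(H)` reads as the second conjunct. -/
theorem stmt_6_general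
    {H : Type*} [NormedAddCommGroup H] [InnerProductSpace ℝ H] [CompleteSpace H]
    (Q R : H →L[ℝ] H)
    (hRsa : IsSelfAdjoint R)
    (hRR : ∀ x : H, R (R x) = Q x) :
    LinearMap.ker (Q : H →ₗ[ℝ] H) = LinearMap.ker (R : H →ₗ[ℝ] H) ∧
    ∀ u ∈ (LinearMap.ker (R : H →ₗ[ℝ] H))ᗮ, ∀ ε > (0 : ℝ), ∃ v : H, ‖R v - u‖ < ε := by
  have hQ : R ∘L R = Q := ContinuousLinearMap.ext hRR
  refine ⟨hQ ▸ hRsa.ker_comp_self, fun u hu ε hε => ?_⟩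
  rw [hRsa.orthogonal_ker] at hu
  obtain ⟨_, ⟨v, rfl⟩, hv⟩ := Metric.mem_closure_iff.mp hu ε hε
  exact ⟨v, by rwa [← dist_eq_norm, dist_comm]⟩

/-- For a positive semidefinite symmetric bounded operator `Q` with square root `R = Q^{1/2}`:
`ker Q = ker Q^{1/2}`, and `Q(H)` is dense in the operator-range Hilbert space `Q^{1/2}(H)`.
Since the `Q^{1/2}(H)`-distance between `Q v = R (R v)` and `R u` (for `u ∈ (ker R)ᗮ`)
equals `‖R v - u‖_H` (the pseudo-preimages being `R v` and `u`), the density statement is: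
every `u ∈ (ker R)ᗮ` is approximated by elements `R v` in the `H`-norm. -/
theorem stmt_6
    {H : Type*} [NormedAddCommGroup H] [InnerProductSpace ℝ H] [CompleteSpace H]
    (Q R : H →L[ℝ] H)
    (hQsa : IsSelfAdjoint Q) (hQpos : ∀ x : H, 0 ≤ ⟪Q x, x⟫)
    (hRsa : IsSelfAdjoint R) (hRpos : ∀ x : H, 0 ≤ ⟪R x, x⟫)
    (hRR : ∀ x : H, R (R x) = Q x) :
    LinearMap.ker (Q : H →ₗ[ℝ] H) = LinearMap.ker (R : H →ₗ[ℝ] H) ∧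
    ∀ u ∈ (LinearMap.ker (R : H →ₗ[ℝ] H))ᗮ, ∀ ε > (0 : ℝ), ∃ v : H, ‖R v - u‖ < ε :=
  stmt_6_general Q R hRsa hRR
end

section
/- Let H be a separable Hilbert space, V ⊂ H a finite-dimensional subspace with orthogonal projection P_V, α ≥ 0, and A a densely defined self-adjoint positive definite operator with compact inverse. Suppose G ∈ Σ⁺(H) maps V into V and satisfies ‖G^{1/2} P_V v‖ ≥ c ‖A^{−α/2} P_V v‖ for all v ∈ H and some c > 0. Then the restriction G|_V : V → V is invertible and ‖A^{−α/2} G|_V^{−1} P_V A^{−α/2}‖_{L(H)} ≤ C for a constant C depending only on c. -/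
open scoped RealInnerProductSpace

/-!
Since `G = R²` with `R` self-adjoint, `⟪G v, v⟫ = ‖R v‖²`, so the hypothesis says that `G` is
coercive on `V` relative to `A^{-α/2}`: `c² ‖A^{-α/2} v‖² ≤ ⟪G v, v⟫`. As `A^{-α/2}` is injective,
`G|_V` is injective, hence invertible on the finite-dimensional `V`. If `G w = P_V A^{-α/2} x` with
`w ∈ V`, then `c² ‖A^{-α/2} w‖² ≤ ⟪P_V A^{-α/2} x, w⟫ = ⟪x, A^{-α/2} w⟫ ≤ ‖x‖ ‖A^{-α/2} w‖`,
which gives the bound with `C = 1 / c²`.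
-/

section Coercive

variable {H : Type*} [NormedAddCommGroup H] [InnerProductSpace ℝ H]
  {A G : H →ₗ[ℝ] H} {V : Submodule ℝ H} {κ : ℝ}

theorem inner_apply_self_eq_norm_sq_of_isSymmetric {R : H →ₗ[ℝ] H} (hR : R.IsSymmetric)
    (hRR : ∀ x, R (R x) = G x) (x : H) : ⟪G x, x⟫ = ‖R x‖ ^ 2 := by
  rw [← hRR, ← real_inner_self_eq_norm_sq]
  exact hR (R x) x

theorem restrict_injective_of_coercive (hκ : 0 < κ) (hA : Function.Injective A)
    (hcoer : ∀ v ∈ V, κ * ‖A v‖ ^ 2 ≤ ⟪G v, v⟫) (hGV : Set.MapsTo G V V) :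
    Function.Injective (G.restrict hGV) := by
  refine (injective_iff_map_eq_zero _).2 fun v hv => ?_
  have hGv : G v = 0 := congrArg Subtype.val hv
  have hAv : κ * ‖A v‖ ^ 2 ≤ 0 := by simpa [hGv] using hcoer v v.2
  have hAv0 : ‖A v‖ ^ 2 = 0 := le_antisymm (nonpos_of_mul_nonpos_right hAv hκ) (sq_nonneg _)
  exact Subtype.ext ((injective_iff_map_eq_zero A).1 hA v (by simpa using hAv0))

theorem mul_norm_le_of_coercive [V.HasOrthogonalProjection] (hA : A.IsSymmetric)
    (hcoer : ∀ v ∈ V, κ * ‖A v‖ ^ 2 ≤ ⟪G v, v⟫) {w x : H} (hw : w ∈ V)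
    (hGw : G w = V.starProjection (A x)) : κ * ‖A w‖ ≤ ‖x‖ := by
  have hinner : ⟪G w, w⟫ = ⟪x, A w⟫ := by
    rw [hGw, V.inner_starProjection_left_eq_right, V.starProjection_eq_self_iff.2 hw]
    exact hA x w
  have hsq : κ * ‖A w‖ ^ 2 ≤ ‖x‖ * ‖A w‖ :=
    (hcoer w hw).trans (hinner.trans_le (real_inner_le_norm x (A w)))
  rcases (norm_nonneg (A w)).eq_or_lt with h0 | hpos
  · rw [← h0, mul_zero]
    exact norm_nonneg x
  · nlinarith

end Coercive

theorem stmt_16_general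
    {H : Type*} [NormedAddCommGroup H] [InnerProductSpace ℝ H] [CompleteSpace H]
    (Aα : H →L[ℝ] H) (c : ℝ) (hc : 0 < c)
    (hAsa : IsSelfAdjoint Aα)
    (hAinj : Function.Injective Aα) :
    ∃ C : ℝ, ∀ (V : Submodule ℝ H) [FiniteDimensional ℝ V],
      ∀ G R : H →L[ℝ] H,
      IsSelfAdjoint G → (∀ x : H, 0 ≤ ⟪G x, x⟫) →
      IsSelfAdjoint R → (∀ x : H, 0 ≤ ⟪R x, x⟫) → (∀ x : H, R (R x) = G x) →
      (∀ v ∈ V, G v ∈ V) →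
      (∀ v : H, c * ‖Aα (V.orthogonalProjection v : H)‖
        ≤ ‖R (V.orthogonalProjection v : H)‖) →
      ∃ B : V →L[ℝ] V,
        (∀ v : V, B (V.orthogonalProjection (G v)) = v) ∧
        (∀ v : V, G (B v : H) = (v : H)) ∧
        (∀ x : H, ‖Aα ((B (V.orthogonalProjection (Aα x)) : V) : H)‖ ≤ C * ‖x‖) := by
  refine ⟨1 / c ^ 2, fun V _ G R _ _ hRsa _ hRR hGV hlow => ?_⟩
  have hcoer : ∀ v ∈ V, c ^ 2 * ‖Aα v‖ ^ 2 ≤ ⟪G v, v⟫ := fun v hv => by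
    have := hlow v
    rw [← V.starProjection_apply, V.starProjection_eq_self_iff.2 hv] at this
    calc c ^ 2 * ‖Aα v‖ ^ 2 = (c * ‖Aα v‖) ^ 2 := by ring
      _ ≤ ‖R v‖ ^ 2 := pow_le_pow_left₀ (by positivity) this 2
      _ = ⟪G v, v⟫ :=
        (inner_apply_self_eq_norm_sq_of_isSymmetric (G := G) hRsa.isSymmetric hRR v).symm
  let e := LinearEquiv.ofInjectiveEndo _
    (restrict_injective_of_coercive (by positivity) hAinj hcoer hGV)
  have hGB : ∀ v : V, G (e.symm v) = v := fun v => congrArg Subtype.val (e.apply_symm_apply v)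
  refine ⟨e.symm.toContinuousLinearEquiv, fun v => ?_, hGB, fun x => ?_⟩
  · have hPG : V.orthogonalProjection (G v) = e v :=
      Subtype.ext (V.starProjection_eq_self_iff.2 (hGV v v.2))
    rw [ContinuousLinearEquiv.coe_coe, LinearEquiv.coe_toContinuousLinearEquiv', hPG]
    exact e.symm_apply_apply v
  · rw [one_div, inv_mul_eq_div, le_div_iff₀' (by positivity)]
    exact mul_norm_le_of_coercive hAsa.isSymmetric hcoer (e.symm _).2 (hGB _)

/-- Uniform bound on `A^{-α/2} G|_V^{-1} P_V A^{-α/2}`: there is a constant `C`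
depending only on `c` (the operators `Aα = A^{-α/2}` and `c` are fixed, `V`, `G` vary)
such that whenever `G ∈ Σ⁺(H)` maps the finite-dimensional subspace `V` into itself and
its square root `R = G^{1/2}` satisfies `‖G^{1/2} P_V v‖ ≥ c ‖A^{-α/2} P_V v‖` for all
`v`, the restriction `G|_V` is invertible (with inverse `B`) and
`‖A^{-α/2} G|_V^{-1} P_V A^{-α/2}‖ ≤ C`. -/
theorem stmt_16
    {H : Type*} [NormedAddCommGroup H] [InnerProductSpace ℝ H] [CompleteSpace H]
    (Aα : H →L[ℝ] H) (c : ℝ) (hc : 0 < c)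
    (hAsa : IsSelfAdjoint Aα) (hApos : ∀ x : H, 0 ≤ ⟪Aα x, x⟫)
    (hAinj : Function.Injective Aα) :
    ∃ C : ℝ, ∀ (V : Submodule ℝ H) [FiniteDimensional ℝ V],
      ∀ G R : H →L[ℝ] H,
      IsSelfAdjoint G → (∀ x : H, 0 ≤ ⟪G x, x⟫) →
      IsSelfAdjoint R → (∀ x : H, 0 ≤ ⟪R x, x⟫) → (∀ x : H, R (R x) = G x) →
      (∀ v ∈ V, G v ∈ V) →
      (∀ v : H, c * ‖Aα (V.orthogonalProjection v : H)‖
        ≤ ‖R (V.orthogonalProjection v : H)‖) →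
      ∃ B : V →L[ℝ] V,
        (∀ v : V, B (V.orthogonalProjection (G v)) = v) ∧
        (∀ v : V, G (B v : H) = (v : H)) ∧
        (∀ x : H, ‖Aα ((B (V.orthogonalProjection (Aα x)) : V) : H)‖ ≤ C * ‖x‖) :=
  stmt_16_general Aα c hc hAsa hAinj
end

section
/- Let H₁, H₂ be separable Hilbert spaces, (μⱼ, eⱼ) the eigenpairs of a positive semidefinite injective trace class operator C on H₁ with all μⱼ > 0, and Γ ∈ L₂(H₁,H₂) a Hilbert–Schmidt operator. Let μ be a centered Gaussian measure on H₁ with covariance C. Then the series Σⱼ μⱼ^{−1/2} ⟨x, eⱼ⟩ Γeⱼ converges in L²((H₁,μ), H₂), defining a measurable map ΓC^{−1/2}, and ∫_{H₁} ‖ΓC^{−1/2}x‖²_{H₂} dμ(x) = ‖Γ‖²_{L₂(H₁,H₂)}. -/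
open MeasureTheory ProbabilityTheory Filter
open scoped RealInnerProductSpace

/-!
Under `μ` the normalized coordinates `ξⱼ x = μⱼ^{-1/2} ⟪x, eⱼ⟫` are orthonormal in `L²(μ)`, by the
covariance identity. Hence each `v ↦ ξⱼ • v` is a linear isometry `H₂ → L²(μ; H₂)`, and these
isometries have pairwise orthogonal ranges. The partial sums of `Σⱼ ξⱼ • Γ eⱼ` are therefore
partial sums of an orthogonal series in the Hilbert space `L²(μ; H₂)` whose terms have norms
`‖Γ eⱼ‖`; square-summability makes it converge, and Pythagoras gives the norm of its sum.
-/

theorem OrthogonalFamily.norm_tsum_sq {ι 𝕜 E : Type*} [RCLike 𝕜] [NormedAddCommGroup E]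
    [InnerProductSpace 𝕜 E] [CompleteSpace E] {G : ι → Type*} [∀ i, NormedAddCommGroup (G i)]
    [∀ i, InnerProductSpace 𝕜 (G i)] {V : ∀ i, G i →ₗᵢ[𝕜] E} (hV : OrthogonalFamily 𝕜 G V)
    {f : ∀ i, G i} (hf : Summable fun i => ‖f i‖ ^ 2) :
    ‖∑' i, V i (f i)‖ ^ 2 = ∑' i, ‖f i‖ ^ 2 := by
  have hsum : Summable fun i => V i (f i) := (hV.summable_iff_norm_sq_summable f).2 hf
  have hlim := (hsum.hasSum.norm).pow 2
  simp only [hV.norm_sum] at hlim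
  exact tendsto_nhds_unique hlim hf.hasSum

namespace MeasureTheory

variable {α E : Type*} {m : MeasurableSpace α} {μ : Measure α} [NormedAddCommGroup E]

theorem Lp.coeFn_finset_sum {ι : Type*} {p : ENNReal} (s : Finset ι) (F : ι → Lp E p μ) :
    ⇑(∑ i ∈ s, F i) =ᵐ[μ] ∑ i ∈ s, ⇑(F i) := by
  classical
  induction s using Finset.induction_on with
  | empty => simpa using Lp.coeFn_zero E p μ
  | insert i s hi ih =>
    rw [Finset.sum_insert hi, Finset.sum_insert hi]
    filter_upwards [Lp.coeFn_add (F i) (∑ j ∈ s, F j), ih] with x hadd hs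
    rw [hadd, Pi.add_apply, Pi.add_apply, hs]

variable [InnerProductSpace ℝ E]

theorem L2.integral_norm_sq_eq_norm_sq (F : Lp E 2 μ) : ∫ x, ‖F x‖ ^ 2 ∂μ = ‖F‖ ^ 2 := by
  simp only [← real_inner_self_eq_norm_sq, L2.inner_def]

theorem MemLp.smul_const {ξ : α → ℝ} (hξ : MemLp ξ 2 μ) (v : E) :
    MemLp (fun x => ξ x • v) 2 μ :=
  (ContinuousLinearMap.toSpanSingleton ℝ v).comp_memLp' hξ

noncomputable def MemLp.smulRightL2 {ξ : α → ℝ} (hξ : MemLp ξ 2 μ) : E →ₗ[ℝ] Lp E 2 μ where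
  toFun v := (hξ.smul_const v).toLp
  map_add' v w := by
    rw [← MemLp.toLp_add]
    exact MemLp.toLp_congr _ _ (Eventually.of_forall fun x => smul_add _ _ _)
  map_smul' c v := by
    rw [RingHom.id_apply, ← MemLp.toLp_const_smul]
    exact MemLp.toLp_congr _ _ (Eventually.of_forall fun x => smul_comm _ _ _)

theorem MemLp.coeFn_smulRightL2 {ξ : α → ℝ} (hξ : MemLp ξ 2 μ) (v : E) :
    hξ.smulRightL2 v =ᵐ[μ] fun x => ξ x • v :=
  (hξ.smul_const v).coeFn_toLp

theorem MemLp.inner_smulRightL2 {ξ η : α → ℝ} (hξ : MemLp ξ 2 μ) (hη : MemLp η 2 μ) (v w : E) :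
    ⟪hξ.smulRightL2 v, hη.smulRightL2 w⟫ = (∫ x, ξ x * η x ∂μ) * ⟪v, w⟫ := by
  rw [L2.inner_def, ← integral_mul_const]
  refine integral_congr_ae ?_
  filter_upwards [hξ.coeFn_smulRightL2 v, hη.coeFn_smulRightL2 w] with x hv hw
  rw [hv, hw, real_inner_smul_left, real_inner_smul_right]
  ring

theorem exists_tendsto_integral_norm_sq_sum_smul [CompleteSpace E]
    {ξ : ℕ → α → ℝ} (hξ : ∀ j, MemLp (ξ j) 2 μ)
    (horth : ∀ i j, ∫ x, ξ i x * ξ j x ∂μ = if i = j then 1 else 0)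
    {v : ℕ → E} (hv : Summable fun j => ‖v j‖ ^ 2) :
    ∃ g : α → E, MemLp g 2 μ ∧
      Tendsto (fun N => ∫ x, ‖(∑ j ∈ Finset.range N, ξ j x • v j) - g x‖ ^ 2 ∂μ)
        atTop (nhds 0) ∧
      ∫ x, ‖g x‖ ^ 2 ∂μ = ∑' j, ‖v j‖ ^ 2 := by
  let V : ℕ → E →ₗᵢ[ℝ] Lp E 2 μ := fun j =>
    (hξ j).smulRightL2.isometryOfInner fun u w => by
      rw [MemLp.inner_smulRightL2, horth, if_pos rfl, one_mul]
  have hV : OrthogonalFamily ℝ (fun _ => E) V := fun i j hij u w => by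
    simp only [V, LinearMap.coe_isometryOfInner, MemLp.inner_smulRightL2, horth, if_neg hij,
      zero_mul]
  have hsum : Summable fun j => V j (v j) := (hV.summable_iff_norm_sq_summable v).2 hv
  set G := ∑' j, V j (v j)
  refine ⟨G, Lp.memLp G, ?_, ?_⟩
  · have hpartial : ∀ N, ∫ x, ‖(∑ j ∈ Finset.range N, ξ j x • v j) - G x‖ ^ 2 ∂μ
        = ‖(∑ j ∈ Finset.range N, V j (v j)) - G‖ ^ 2 := fun N => by
      rw [← L2.integral_norm_sq_eq_norm_sq]
      refine integral_congr_ae ?_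
      filter_upwards [Lp.coeFn_sub (∑ j ∈ Finset.range N, V j (v j)) G,
        Lp.coeFn_finset_sum (Finset.range N) fun j => V j (v j),
        ae_all_iff.2 fun j => (hξ j).coeFn_smulRightL2 (v j)] with x hsub hfin hcoe
      rw [hsub, Pi.sub_apply, hfin, Finset.sum_apply]
      exact congrArg (‖· - G x‖ ^ 2) (Finset.sum_congr rfl fun j _ => (hcoe j).symm)
    simp only [hpartial]
    have hlim := ((hsum.hasSum.tendsto_sum_nat.sub_const G).norm).pow 2
    rwa [sub_self, norm_zero, zero_pow two_ne_zero] at hlim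
  · rw [L2.integral_norm_sq_eq_norm_sq, hV.norm_tsum_sq hv]

end MeasureTheory

-- A nonzero Bochner integral certifies integrability, as non-integrable functions integrate to `0`.
theorem memLp_two_of_integral_mul_self_ne_zero {α : Type*} {m : MeasurableSpace α}
    {μ : Measure α} {f : α → ℝ} (hf : AEStronglyMeasurable f μ)
    (h : ∫ x, f x * f x ∂μ ≠ 0) : MemLp f 2 μ :=
  (memLp_two_iff_integrable_sq hf).2 <| by
    simpa only [sq] using Integrable.of_integral_ne_zero h

theorem integral_inner_mul_inner_eq_ite {ι H : Type*} [DecidableEq ι] [NormedAddCommGroup H]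
    [InnerProductSpace ℝ H] {m : MeasurableSpace H} {μ : Measure H} {C : H →L[ℝ] H}
    (hcov : ∀ u v : H, ∫ x, ⟪x, u⟫ * ⟪x, v⟫ ∂μ = ⟪C u, v⟫)
    {e : ι → H} (he : Orthonormal ℝ e) {c : ι → ℝ} (hCe : ∀ j, C (e j) = c j • e j) (i j : ι) :
    ∫ x, ⟪x, e i⟫ * ⟪x, e j⟫ ∂μ = if i = j then c i else 0 := by
  rw [hcov, hCe, real_inner_smul_left, orthonormal_iff_ite.mp he i j, mul_ite, mul_one, mul_zero]

theorem stmt_17_general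
    {H₁ H₂ : Type*}
    [NormedAddCommGroup H₁] [InnerProductSpace ℝ H₁]
    [MeasurableSpace H₁] [BorelSpace H₁]
    [NormedAddCommGroup H₂] [InnerProductSpace ℝ H₂] [CompleteSpace H₂]
    (e : HilbertBasis ℕ ℝ H₁) (muj : ℕ → ℝ) (hmu : ∀ j, 0 < muj j)
    (C : H₁ →L[ℝ] H₁) (hCe : ∀ j, C (e j) = muj j • e j)
    (Γ : H₁ →L[ℝ] H₂) (hΓ : Summable fun j => ‖Γ (e j)‖ ^ 2)
    (μ : Measure H₁)
    (hcov : ∀ u v : H₁, ∫ x, ⟪x, u⟫ * ⟪x, v⟫ ∂μ = ⟪C u, v⟫) :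
    ∃ g : H₁ → H₂, MemLp g 2 μ ∧
      Tendsto
        (fun N => ∫ x,
          ‖(∑ j ∈ Finset.range N, ((Real.sqrt (muj j))⁻¹ * ⟪x, e j⟫) • Γ (e j)) - g x‖ ^ 2 ∂μ)
        atTop (nhds 0) ∧
      ∫ x, ‖g x‖ ^ 2 ∂μ = ∑' j, ‖Γ (e j)‖ ^ 2 := by
  have hcoord := integral_inner_mul_inner_eq_ite hcov e.orthonormal hCe
  have hmem : ∀ j, MemLp (fun x => (Real.sqrt (muj j))⁻¹ * ⟪x, e j⟫) 2 μ := fun j =>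
    (memLp_two_of_integral_mul_self_ne_zero (f := fun x => ⟪x, e j⟫)
      (continuous_id.inner continuous_const).aestronglyMeasurable
      (by rw [hcoord, if_pos rfl]; exact (hmu j).ne')).const_mul _
  have horth : ∀ i j, ∫ x, ((Real.sqrt (muj i))⁻¹ * ⟪x, e i⟫) *
      ((Real.sqrt (muj j))⁻¹ * ⟪x, e j⟫) ∂μ = if i = j then 1 else 0 := fun i j => by
    simp_rw [mul_mul_mul_comm _ ⟪_, e i⟫]
    rw [integral_const_mul, hcoord]
    split_ifs with hij
    · subst hij
      rw [← mul_inv, Real.mul_self_sqrt (hmu i).le, inv_mul_cancel₀ (hmu i).ne']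
    · rw [mul_zero]
  exact exists_tendsto_integral_norm_sq_sum_smul hmem horth hΓ

/-- Lemma 2.2 of Galmarino–Maslowski type: for a centered Gaussian measure `μ` on `H₁`
with injective trace class covariance `C` (eigenpairs `(μⱼ, eⱼ)`, `μⱼ > 0`) and a
Hilbert–Schmidt operator `Γ : H₁ → H₂`, the series `Σⱼ μⱼ^{-1/2} ⟨x, eⱼ⟩ Γ eⱼ`
converges in `L²((H₁,μ), H₂)` to a map `g = Γ C^{-1/2}` with
`∫ ‖g x‖² dμ(x) = ‖Γ‖²_{L₂(H₁,H₂)} = Σⱼ ‖Γ eⱼ‖²`. -/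
theorem stmt_17
    {H₁ H₂ : Type*}
    [NormedAddCommGroup H₁] [InnerProductSpace ℝ H₁] [CompleteSpace H₁]
    [MeasurableSpace H₁] [BorelSpace H₁]
    [NormedAddCommGroup H₂] [InnerProductSpace ℝ H₂] [CompleteSpace H₂]
    (e : HilbertBasis ℕ ℝ H₁) (muj : ℕ → ℝ) (hmu : ∀ j, 0 < muj j)
    (C : H₁ →L[ℝ] H₁) (hCe : ∀ j, C (e j) = muj j • e j) (hCtr : Summable muj)
    (Γ : H₁ →L[ℝ] H₂) (hΓ : Summable fun j => ‖Γ (e j)‖ ^ 2)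
    (μ : Measure H₁) [IsProbabilityMeasure μ]
    (hgauss : ∀ j, Measure.map (fun x => ⟪x, e j⟫) μ
      = gaussianReal 0 (Real.toNNReal (muj j)))
    (hcov : ∀ u v : H₁, ∫ x, ⟪x, u⟫ * ⟪x, v⟫ ∂μ = ⟪C u, v⟫) :
    ∃ g : H₁ → H₂, MemLp g 2 μ ∧
      Tendsto
        (fun N => ∫ x,
          ‖(∑ j ∈ Finset.range N, ((Real.sqrt (muj j))⁻¹ * ⟪x, e j⟫) • Γ (e j)) - g x‖ ^ 2 ∂μ)
        atTop (nhds 0) ∧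
      ∫ x, ‖g x‖ ^ 2 ∂μ = ∑' j, ‖Γ (e j)‖ ^ 2 :=
  stmt_17_general e muj hmu C hCe Γ hΓ μ hcov
end

section
/- Let A be a densely defined self-adjoint positive definite operator on a separable Hilbert space H with compact inverse, semigroup S(t), and Q ∈ Σ⁺(H). Suppose ∫₀^T ‖A^{α/2} S(t) Q^{1/2}‖²_{L(H)} dt < ∞ for some α ≥ 0 and T > 0. Define Q_V(T) := ∫₀^T S_V(s) P_V Q S_V(s) P_V ds and Q(T) := ∫₀^T S(s) Q S(s) ds, where V ⊂ Ḣ^α is a closed subspace, P_V the orthogonal projection, and S_V(t) symmetric operators on V with ∫₀^T ‖A^{α/2} S_V(t) P_V Q^{1/2}‖²_{L(H)} dt < ∞. Then ‖A^{α/2}(Q(T) − Q_V(T))A^{α/2}‖_{L(H)} ≤ C (∫₀^T ‖A^{α/2}(S(t) − S_V(t)P_V) Q^{1/2}‖²_{L(H)} dt)^{1/2} for a constant C depending only on the two square-integral bounds. -/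
open MeasureTheory
open scoped RealInnerProductSpace

private lemma amgm_div {ε a b : ℝ} (hε : 0 < ε) (ha : 0 ≤ a) (hb : 0 ≤ b) :
    a * b ≤ (ε * a ^ 2 + b ^ 2 / ε) / 2 := by
  have h : 2 * a * b * ε ≤ ε ^ 2 * a ^ 2 + b ^ 2 := by nlinarith [sq_nonneg (ε * a - b)]
  calc a * b = (2 * a * b * ε) / (2 * ε) := by field_simp
    _ ≤ (ε ^ 2 * a ^ 2 + b ^ 2) / (2 * ε) := by
        apply div_le_div_of_nonneg_right h ?_ |>.trans_eq rfl
        positivity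
    _ = (ε * a ^ 2 + b ^ 2 / ε) / 2 := by field_simp

private lemma aux_amgm {x a b : ℝ} (ha : 0 ≤ a) (hb : 0 ≤ b)
    (h : ∀ ε : ℝ, 0 < ε → x ≤ ε * a + b / ε) : x ≤ 2 * Real.sqrt (a * b) := by
  rcases ha.eq_or_lt with ha0 | ha0
  · have hx : x ≤ 0 := by
      by_contra hx
      push_neg at hx
      have h1 := h ((b + 1) / x) (by positivity)
      rw [← ha0, mul_zero, zero_add, div_div_eq_mul_div, le_div_iff₀ (by linarith)] at h1
      nlinarith
    have : 0 ≤ 2 * Real.sqrt (a * b) := by positivity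
    linarith
  rcases hb.eq_or_lt with hb0 | hb0
  · have hx : x ≤ 0 := by
      by_contra hx
      push_neg at hx
      have h1 := h (x / (2 * a)) (by positivity)
      rw [← hb0] at h1
      have : x / (2 * a) * a = x / 2 := by field_simp
      rw [this, zero_div, add_zero] at h1
      linarith
    have : 0 ≤ 2 * Real.sqrt (a * b) := by positivity
    linarith
  · set ε := Real.sqrt (b / a) with hεdef
    have hε : 0 < ε := Real.sqrt_pos.2 (by positivity)
    have hε2 : ε ^ 2 = b / a := Real.sq_sqrt (by positivity)
    have hb' : b = ε ^ 2 * a := by field_simp at hε2; linarith [hε2]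
    have key : Real.sqrt (a * b) = ε * a := by
      rw [show a * b = (ε * a) ^ 2 by rw [hb']; ring]
      exact Real.sqrt_sq (by positivity)
    have h1 := h ε hε
    have : b / ε = ε * a := by rw [hb']; field_simp
    rw [this] at h1
    rw [key]; linarith

set_option maxHeartbeats 1000000 in
/-- Covariance comparison bound: with `F t = A^{α/2} S(t) Q^{1/2}` and
`G t = A^{α/2} S_V(t) P_V Q^{1/2}` one has `A^{α/2} Q(T) A^{α/2} = ∫₀^T F t (F t)* dt`
and `A^{α/2} Q_V(T) A^{α/2} = ∫₀^T G t (G t)* dt` (encoded in quadratic-form sense via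
`⟨D v, w⟩ = ∫₀^T (⟨F t* v, F t* w⟩ - ⟨G t* v, G t* w⟩) dt` for the difference `D`), and
`‖A^{α/2}(Q(T) - Q_V(T)) A^{α/2}‖ ≤ C (∫₀^T ‖F t - G t‖² dt)^{1/2}` with a constant `C`
depending only on the square-integral bounds `K₁, K₂` of `F` and `G`. -/
theorem stmt_19
    {H : Type*} [NormedAddCommGroup H] [InnerProductSpace ℝ H] [CompleteSpace H]
    (K₁ K₂ : ℝ) :
    ∃ C : ℝ, ∀ T : ℝ, 0 < T → ∀ (F G : ℝ → H →L[ℝ] H) (D : H →L[ℝ] H),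
      IntervalIntegrable (fun t => ‖F t‖ ^ 2) volume 0 T →
      IntervalIntegrable (fun t => ‖G t‖ ^ 2) volume 0 T →
      IntervalIntegrable (fun t => ‖F t - G t‖ ^ 2) volume 0 T →
      (∫ t in (0:ℝ)..T, ‖F t‖ ^ 2) ≤ K₁ →
      (∫ t in (0:ℝ)..T, ‖G t‖ ^ 2) ≤ K₂ →
      (∀ v w : H, ⟪D v, w⟫ = ∫ t in (0:ℝ)..T,
        (⟪ContinuousLinearMap.adjoint (F t) v, ContinuousLinearMap.adjoint (F t) w⟫ -
         ⟪ContinuousLinearMap.adjoint (G t) v, ContinuousLinearMap.adjoint (G t) w⟫)) →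
      ‖D‖ ≤ C * Real.sqrt (∫ t in (0:ℝ)..T, ‖F t - G t‖ ^ 2) := by
  refine ⟨Real.sqrt (2 * (K₁ + K₂)), ?_⟩
  intro T hT F G D hF hG hΔ hK₁ hK₂ hD
  set I := ∫ t in (0:ℝ)..T, ‖F t - G t‖ ^ 2 with hIdef
  have hI0 : 0 ≤ I := intervalIntegral.integral_nonneg hT.le (fun t _ => sq_nonneg _)
  have hF0 : 0 ≤ ∫ t in (0:ℝ)..T, ‖F t‖ ^ 2 :=
    intervalIntegral.integral_nonneg hT.le (fun t _ => sq_nonneg _)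
  have hG0 : 0 ≤ ∫ t in (0:ℝ)..T, ‖G t‖ ^ 2 :=
    intervalIntegral.integral_nonneg hT.le (fun t _ => sq_nonneg _)
  have hK10 : 0 ≤ K₁ := hF0.trans hK₁
  have hK20 : 0 ≤ K₂ := hG0.trans hK₂
  set K := K₁ + K₂ with hKdef
  have hK0 : 0 ≤ K := by positivity
  apply ContinuousLinearMap.opNorm_le_bound _ (by positivity)
  intro v
  rcases eq_or_ne (D v) 0 with h0 | h0
  · rw [h0, norm_zero]; positivity
  have hv0 : v ≠ 0 := fun h => h0 (by rw [h, map_zero])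
  have hv : 0 < ‖v‖ := norm_pos_iff.2 hv0
  set w := D v with hwdef
  have hw : 0 < ‖w‖ := norm_pos_iff.2 h0
  -- main ε-estimate
  have main : ∀ ε : ℝ, 0 < ε →
      ‖w‖ ^ 2 ≤ (ε * I + K / (2 * ε)) * (‖v‖ * ‖w‖) := by
    intro ε hε
    have hsq : ‖w‖ ^ 2 = ⟪D v, w⟫ := by
      rw [← hwdef, real_inner_self_eq_norm_sq]
    rw [hsq, hD v w]
    by_cases hint : IntervalIntegrable (fun t =>
        ⟪ContinuousLinearMap.adjoint (F t) v, ContinuousLinearMap.adjoint (F t) w⟫ -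
        ⟪ContinuousLinearMap.adjoint (G t) v, ContinuousLinearMap.adjoint (G t) w⟫)
        volume 0 T
    · have hbd : IntervalIntegrable (fun t =>
          (ε * ‖F t - G t‖ ^ 2 + (‖F t‖ ^ 2 + ‖G t‖ ^ 2) / (2 * ε)) * (‖v‖ * ‖w‖))
          volume 0 T :=
        ((hΔ.const_mul ε).add ((hF.add hG).div_const (2 * ε))).mul_const _
      have ptw : ∀ t ∈ Set.Icc (0:ℝ) T,
          ⟪ContinuousLinearMap.adjoint (F t) v, ContinuousLinearMap.adjoint (F t) w⟫ -
          ⟪ContinuousLinearMap.adjoint (G t) v, ContinuousLinearMap.adjoint (G t) w⟫ ≤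
          (ε * ‖F t - G t‖ ^ 2 + (‖F t‖ ^ 2 + ‖G t‖ ^ 2) / (2 * ε)) * (‖v‖ * ‖w‖) := by
        intro t _
        have e1 : ⟪ContinuousLinearMap.adjoint (F t) v, ContinuousLinearMap.adjoint (F t) w⟫ -
            ⟪ContinuousLinearMap.adjoint (G t) v, ContinuousLinearMap.adjoint (G t) w⟫ =
            ⟪ContinuousLinearMap.adjoint (F t - G t) v, ContinuousLinearMap.adjoint (F t) w⟫ +
            ⟪ContinuousLinearMap.adjoint (G t) v, ContinuousLinearMap.adjoint (F t - G t) w⟫ := by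
          rw [map_sub]
          simp only [ContinuousLinearMap.sub_apply, inner_sub_left, inner_sub_right]
          ring
        rw [e1]
        have n1 : ‖ContinuousLinearMap.adjoint (F t - G t) v‖ ≤ ‖F t - G t‖ * ‖v‖ := by
          calc ‖ContinuousLinearMap.adjoint (F t - G t) v‖ ≤
              ‖ContinuousLinearMap.adjoint (F t - G t)‖ * ‖v‖ :=
                ContinuousLinearMap.le_opNorm _ _
            _ = ‖F t - G t‖ * ‖v‖ := by rw [LinearIsometryEquiv.norm_map]
        have n2 : ‖ContinuousLinearMap.adjoint (F t - G t) w‖ ≤ ‖F t - G t‖ * ‖w‖ := by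
          calc ‖ContinuousLinearMap.adjoint (F t - G t) w‖ ≤
              ‖ContinuousLinearMap.adjoint (F t - G t)‖ * ‖w‖ :=
                ContinuousLinearMap.le_opNorm _ _
            _ = ‖F t - G t‖ * ‖w‖ := by rw [LinearIsometryEquiv.norm_map]
        have n3 : ‖ContinuousLinearMap.adjoint (F t) w‖ ≤ ‖F t‖ * ‖w‖ := by
          calc ‖ContinuousLinearMap.adjoint (F t) w‖ ≤
              ‖ContinuousLinearMap.adjoint (F t)‖ * ‖w‖ := ContinuousLinearMap.le_opNorm _ _
            _ = ‖F t‖ * ‖w‖ := by rw [LinearIsometryEquiv.norm_map]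
        have n4 : ‖ContinuousLinearMap.adjoint (G t) v‖ ≤ ‖G t‖ * ‖v‖ := by
          calc ‖ContinuousLinearMap.adjoint (G t) v‖ ≤
              ‖ContinuousLinearMap.adjoint (G t)‖ * ‖v‖ := ContinuousLinearMap.le_opNorm _ _
            _ = ‖G t‖ * ‖v‖ := by rw [LinearIsometryEquiv.norm_map]
        have i1 := real_inner_le_norm (ContinuousLinearMap.adjoint (F t - G t) v)
          (ContinuousLinearMap.adjoint (F t) w)
        have i2 := real_inner_le_norm (ContinuousLinearMap.adjoint (G t) v)
          (ContinuousLinearMap.adjoint (F t - G t) w)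
        have b1 : ⟪ContinuousLinearMap.adjoint (F t - G t) v,
            ContinuousLinearMap.adjoint (F t) w⟫ ≤ (‖F t - G t‖ * ‖F t‖) * (‖v‖ * ‖w‖) := by
          calc _ ≤ ‖ContinuousLinearMap.adjoint (F t - G t) v‖ *
              ‖ContinuousLinearMap.adjoint (F t) w‖ := i1
            _ ≤ (‖F t - G t‖ * ‖v‖) * (‖F t‖ * ‖w‖) :=
                mul_le_mul n1 n3 (norm_nonneg _) (by positivity)
            _ = (‖F t - G t‖ * ‖F t‖) * (‖v‖ * ‖w‖) := by ring
        have b2 : ⟪ContinuousLinearMap.adjoint (G t) v,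
            ContinuousLinearMap.adjoint (F t - G t) w⟫ ≤ (‖G t‖ * ‖F t - G t‖) * (‖v‖ * ‖w‖) := by
          calc _ ≤ ‖ContinuousLinearMap.adjoint (G t) v‖ *
              ‖ContinuousLinearMap.adjoint (F t - G t) w‖ := i2
            _ ≤ (‖G t‖ * ‖v‖) * (‖F t - G t‖ * ‖w‖) :=
                mul_le_mul n4 n2 (norm_nonneg _) (by positivity)
            _ = (‖G t‖ * ‖F t - G t‖) * (‖v‖ * ‖w‖) := by ring
        have am1 : ‖F t - G t‖ * ‖F t‖ ≤ (ε * ‖F t - G t‖ ^ 2 + ‖F t‖ ^ 2 / ε) / 2 :=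
          amgm_div hε (norm_nonneg _) (norm_nonneg _)
        have am2 : ‖G t‖ * ‖F t - G t‖ ≤ (ε * ‖F t - G t‖ ^ 2 + ‖G t‖ ^ 2 / ε) / 2 := by
          rw [mul_comm]; exact amgm_div hε (norm_nonneg _) (norm_nonneg _)
        have hvw : 0 ≤ ‖v‖ * ‖w‖ := by positivity
        have comb : (‖F t - G t‖ * ‖F t‖) + (‖G t‖ * ‖F t - G t‖) ≤
            ε * ‖F t - G t‖ ^ 2 + (‖F t‖ ^ 2 + ‖G t‖ ^ 2) / (2 * ε) := by
          have : (ε * ‖F t - G t‖ ^ 2 + ‖F t‖ ^ 2 / ε) / 2 +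
              (ε * ‖F t - G t‖ ^ 2 + ‖G t‖ ^ 2 / ε) / 2 =
              ε * ‖F t - G t‖ ^ 2 + (‖F t‖ ^ 2 + ‖G t‖ ^ 2) / (2 * ε) := by
            field_simp; ring
          linarith
        calc _ ≤ (‖F t - G t‖ * ‖F t‖) * (‖v‖ * ‖w‖) +
            (‖G t‖ * ‖F t - G t‖) * (‖v‖ * ‖w‖) := add_le_add b1 b2
          _ = ((‖F t - G t‖ * ‖F t‖) + (‖G t‖ * ‖F t - G t‖)) * (‖v‖ * ‖w‖) :=
              (add_mul _ _ _).symm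
          _ ≤ (ε * ‖F t - G t‖ ^ 2 + (‖F t‖ ^ 2 + ‖G t‖ ^ 2) / (2 * ε)) * (‖v‖ * ‖w‖) :=
              mul_le_mul_of_nonneg_right comb hvw
      have mono := intervalIntegral.integral_mono_on hT.le hint hbd ptw
      have calc_int : (∫ t in (0:ℝ)..T,
          (ε * ‖F t - G t‖ ^ 2 + (‖F t‖ ^ 2 + ‖G t‖ ^ 2) / (2 * ε)) * (‖v‖ * ‖w‖)) =
          (ε * I + ((∫ t in (0:ℝ)..T, ‖F t‖ ^ 2) + ∫ t in (0:ℝ)..T, ‖G t‖ ^ 2) / (2 * ε)) *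
            (‖v‖ * ‖w‖) := by
        rw [intervalIntegral.integral_mul_const,
          intervalIntegral.integral_add (hΔ.const_mul ε) ((hF.add hG).div_const (2 * ε)),
          intervalIntegral.integral_const_mul, intervalIntegral.integral_div,
          intervalIntegral.integral_add hF hG]
      rw [calc_int] at mono
      refine mono.trans ?_
      have : ((∫ t in (0:ℝ)..T, ‖F t‖ ^ 2) + ∫ t in (0:ℝ)..T, ‖G t‖ ^ 2) / (2 * ε) ≤
          K / (2 * ε) := by
        apply div_le_div_of_nonneg_right ?_ (by positivity) |>.trans_eq rfl
        · rw [hKdef]; linarith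
      have hvw : 0 ≤ ‖v‖ * ‖w‖ := by positivity
      exact mul_le_mul_of_nonneg_right (by linarith) hvw
    · rw [intervalIntegral.integral_undef hint]
      positivity
  -- divide through and apply AM-GM optimization
  have main' : ∀ ε : ℝ, 0 < ε → ‖w‖ / ‖v‖ ≤ ε * I + (K / 2) / ε := by
    intro ε hε
    have h1 := main ε hε
    rw [div_le_iff₀ hv]
    have h2 : ‖w‖ * ‖w‖ ≤ ((ε * I + K / (2 * ε)) * ‖v‖) * ‖w‖ := by nlinarith
    have h3 := le_of_mul_le_mul_right h2 hw
    have : K / (2 * ε) = (K / 2) / ε := by ring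
    rw [this] at h3
    linarith [h3]
  have haux := aux_amgm hI0 (by positivity : (0:ℝ) ≤ K / 2) main'
  have hCeq : Real.sqrt (2 * K) * Real.sqrt I = 2 * Real.sqrt (I * (K / 2)) := by
    have h1 : Real.sqrt (2 * K) * Real.sqrt I = Real.sqrt (2 * K * I) :=
      (Real.sqrt_mul (by positivity) _).symm
    have h2 : 2 * Real.sqrt (I * (K / 2)) = Real.sqrt (2 * K * I) := by
      rw [← Real.sqrt_sq (by positivity : (0:ℝ) ≤ 2 * Real.sqrt (I * (K / 2)))]
      congr 1
      rw [mul_pow, Real.sq_sqrt (by positivity)]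
      ring
    rw [h1, h2]
  rw [div_le_iff₀ hv] at haux
  calc ‖D v‖ = ‖w‖ := rfl
    _ ≤ 2 * Real.sqrt (I * (K / 2)) * ‖v‖ := haux
    _ = Real.sqrt (2 * K) * Real.sqrt I * ‖v‖ := by rw [hCeq]
    _ = Real.sqrt (2 * (K₁ + K₂)) * Real.sqrt I * ‖v‖ := by rw [hKdef]
end
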